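/- arXiv:1706.07451 — 3 statements merged into one kernel-verified Lean document; each statement's English description precedes it below -/
import Mathlib

section
/- Let μ be a graph parameter on finite simple graphs such that: (a) μ is monotone under induced subgraphs up to +1, i.e., μ(G) ≤ μ(G - v) + 1 for every vertex v; (b) if v is adjacent to all other vertices of G and G has at least one edge, then μ(G) = μ(G - v) + 1. Let G be an n-vertex graph with |E(G)| > μ(G)·n - C(μ(G)+1, 2), such that every one-vertex-deleted induced subgraph G - x satisfies |E(G-x)| ≤ μ(G-x)·(n-1) - C(μ(G-x)+1, 2). If u is a vertex of G of degree n-1, then a contradiction follows; in particular, the maximum degree of G is at most n-2. -/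
/-!
Deleting a universal vertex `u` of an `n`-vertex graph with an edge removes `n - 1` edges and, by
axiom (b), lowers `μ` by one; the bound `μ n - C(μ + 1, 2)` then also drops by exactly `n - 1`, so
the strict excess of `G` over its bound passes to `G - u`, against the hypothesis on `G - u`.
-/

open Finset

namespace SimpleGraph

variable {V : Type*} [Fintype V] [DecidableEq V] (G : SimpleGraph V) [DecidableRel G.Adj]

theorem ncard_edgeSet_eq_ncard_edgeSet_induce_compl_add_degree (x : V) :
    G.edgeSet.ncard = (G.induce {x}ᶜ).edgeSet.ncard + G.degree x := by
  have hdeg : G.degree x ≤ #G.edgeFinset := by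
    rw [← card_incidenceFinset_eq_degree]
    exact card_le_card (G.incidenceFinset_subset x)
  rw [← coe_edgeFinset, Set.ncard_coe_finset, ← coe_edgeFinset, Set.ncard_coe_finset,
    card_edgeFinset_induce_compl_singleton, card_edgeFinset_deleteIncidenceSet]
  omega

end SimpleGraph

lemma mul_sub_choose_two_succ_succ (m k : ℕ) :
    ((m + 1 : ℕ) : ℤ) * ((k + 1 : ℕ) : ℤ) - ((m + 1 + 1).choose 2 : ℕ) =
      (m : ℤ) * k - ((m + 1).choose 2 : ℕ) + k := by
  rw [Nat.choose_succ_succ' (m + 1), Nat.choose_one_right]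
  push_cast
  ring

theorem stmt_4
    (μ : ∀ (V : Type) [Fintype V] [DecidableEq V], SimpleGraph V → ℕ)
    (hA : ∀ (V : Type) [Fintype V] [DecidableEq V] (G : SimpleGraph V) (v : V),
      μ V G ≤ μ ↥({v}ᶜ : Set V) (G.induce {v}ᶜ) + 1)
    (hB : ∀ (V : Type) [Fintype V] [DecidableEq V] (G : SimpleGraph V) (v : V),
      (∀ w : V, w ≠ v → G.Adj v w) → G.edgeSet.Nonempty →
      μ V G = μ ↥({v}ᶜ : Set V) (G.induce {v}ᶜ) + 1)
    (V : Type) [Fintype V] [DecidableEq V] (G : SimpleGraph V)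
    [DecidableRel G.Adj] (n : ℕ) (hn : Fintype.card V = n)
    (hE : (G.edgeSet.ncard : ℤ) > μ V G * n - ((μ V G + 1).choose 2 : ℕ))
    (hdel : ∀ x : V, ((G.induce ({x}ᶜ : Set V)).edgeSet.ncard : ℤ) ≤
      μ ↥({x}ᶜ : Set V) (G.induce {x}ᶜ) * (n - 1) -
        ((μ ↥({x}ᶜ : Set V) (G.induce {x}ᶜ) + 1).choose 2 : ℕ)) :
    ∀ u : V, G.degree u < n - 1 := by
  intro u
  subst hn
  by_contra hdeg
  have huniv : G.IsUniversal u :=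
    (G.degree_eq_card_sub_one u).1 (by have := G.degree_lt_card_verts u; omega)
  obtain ⟨k, hk⟩ : ∃ k, Fintype.card V = k + 1 :=
    Nat.exists_eq_add_one.2 (Fintype.card_pos_iff.2 ⟨u⟩)
  have hsplit := G.ncard_edgeSet_eq_ncard_edgeSet_induce_compl_add_degree u
  rw [(G.degree_eq_card_sub_one u).2 huniv, hk, Nat.add_sub_cancel] at hsplit
  have hdelu := hdel u
  rw [hk, Nat.cast_succ, add_sub_cancel_right] at hdelu
  rw [hk] at hE
  set μ' := μ ↥({u}ᶜ : Set V) (G.induce {u}ᶜ)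
  rcases k with _ | k
  · -- only `u` is left, so `μ' = 0` by `hdel`, and then `μ V G ≤ 1` leaves no room for `hE`
    have hμ' : μ' = 0 := by
      have : ((μ' + 1).choose 2 : ℤ) ≤ 0 := by push_cast at hdelu; omega
      have := Nat.choose_eq_zero_iff.1 (by exact_mod_cast this.antisymm (by positivity))
      omega
    have hμ : μ V G ≤ 1 := by have := hA V G u; omega
    interval_cases μ V G <;> simp_all
  · obtain ⟨w, hw⟩ := Fintype.exists_ne_of_one_lt_card (by omega) u
    have hμ : μ V G = μ' + 1 := hB V G u (fun w hw ↦ huniv hw.symm) ⟨s(u, w), huniv hw.symm⟩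
    rw [hμ, mul_sub_choose_two_succ_succ] at hE
    push_cast at hE hsplit hdelu
    linarith
end

section
/- Let μ be an integer-valued graph parameter on finite simple graphs such that for every vertex v, μ(G) - 1 ≤ μ(G - v) ≤ μ(G). Let G be an n-vertex graph with |E(G)| > μ(G)·n - C(μ(G)+1, 2), such that for every vertex x, |E(G - x)| ≤ μ(G-x)·(n-1) - C(μ(G-x)+1, 2). Then every vertex of G has degree strictly greater than μ(G). -/
open SimpleGraph

lemma aux_count {V : Type} [Fintype V] [DecidableEq V] (G : SimpleGraph V)
    [DecidableRel G.Adj] (v : V) :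
    (G.induce ({v}ᶜ : Set V)).edgeSet.ncard + G.degree v = G.edgeSet.ncard := by
  classical
  have himg : Sym2.map (Subtype.val : ({v}ᶜ : Set V) → V) '' (G.induce ({v}ᶜ : Set V)).edgeSet
      = G.edgeSet \ G.incidenceSet v := by
    ext e
    refine Sym2.ind (fun a b => ?_) e
    constructor
    · rintro ⟨e', he', heq⟩
      rw [← heq]
      revert he'
      refine Sym2.ind (fun x y => ?_) e'
      intro hxy
      have hadj : G.Adj x.1 y.1 := by simpa using hxy
      refine ⟨by simpa using hadj, ?_⟩
      intro hinc
      have hv : v ∈ Sym2.map Subtype.val s(x, y) := hinc.2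
      simp only [Sym2.map_pair_eq, Sym2.mem_iff] at hv
      rcases hv with h | h
      · exact x.2 (by simp [h.symm])
      · exact y.2 (by simp [h.symm])
    · rintro ⟨hadj, hninc⟩
      rw [SimpleGraph.mem_edgeSet] at hadj
      have ha : a ∈ ({v}ᶜ : Set V) := by
        intro h
        simp only [Set.mem_singleton_iff] at h
        exact hninc ⟨hadj, by simp [h]⟩
      have hb : b ∈ ({v}ᶜ : Set V) := by
        intro h
        simp only [Set.mem_singleton_iff] at h
        exact hninc ⟨hadj, by simp [h]⟩
      exact ⟨s(⟨a, ha⟩, ⟨b, hb⟩), by simpa using hadj, by simp⟩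
  have hinj : Set.InjOn (Sym2.map (Subtype.val : ({v}ᶜ : Set V) → V))
      (G.induce ({v}ᶜ : Set V)).edgeSet :=
    (Sym2.map.injective Subtype.val_injective).injOn
  have h1 : (G.induce ({v}ᶜ : Set V)).edgeSet.ncard
      = (G.edgeSet \ G.incidenceSet v).ncard := by
    rw [← himg, Set.ncard_image_of_injOn hinj]
  have h2 : (G.edgeSet \ G.incidenceSet v).ncard + (G.incidenceSet v).ncard
      = G.edgeSet.ncard :=
    Set.ncard_diff_add_ncard_of_subset (G.incidenceSet_subset v) (Set.toFinite _)
  have h3 : (G.incidenceSet v).ncard = G.degree v := by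
    rw [Set.ncard_eq_toFinset_card', Set.toFinset_card, card_incidenceSet_eq_degree]
  rw [h1, ← h3, h2]

theorem stmt_5
    (μ : ∀ (V : Type) [Fintype V] [DecidableEq V], SimpleGraph V → ℕ)
    (hax : ∀ (V : Type) [Fintype V] [DecidableEq V] (G : SimpleGraph V) (v : V),
      (μ V G : ℤ) - 1 ≤ μ ↥({v}ᶜ : Set V) (G.induce {v}ᶜ) ∧
        μ ↥({v}ᶜ : Set V) (G.induce {v}ᶜ) ≤ μ V G)
    (V : Type) [Fintype V] [DecidableEq V] (G : SimpleGraph V)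
    [DecidableRel G.Adj] (n : ℕ) (hn : Fintype.card V = n)
    (hμn : (μ V G : ℤ) ≤ n - 1)
    (hE : (G.edgeSet.ncard : ℤ) > μ V G * n - ((μ V G + 1).choose 2 : ℕ))
    (hdel : ∀ x : V, ((G.induce ({x}ᶜ : Set V)).edgeSet.ncard : ℤ) ≤
      μ ↥({x}ᶜ : Set V) (G.induce {x}ᶜ) * (n - 1) -
        ((μ ↥({x}ᶜ : Set V) (G.induce {x}ᶜ) + 1).choose 2 : ℕ)) :
    ∀ v : V, μ V G < G.degree v := by
  intro v
  set m := μ V G with hm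
  set m' := μ (↥({v}ᶜ : Set V)) (G.induce {v}ᶜ) with hm'
  have hcount := aux_count G v
  have hdv := hdel v
  rw [← hm'] at hdv
  obtain ⟨hlo, hhi⟩ := hax V G v
  rw [← hm, ← hm'] at hlo hhi
  have hcases : m' = m ∨ (m ≥ 1 ∧ m' = m - 1) := by omega
  have hdegZ : ((G.induce ({v}ᶜ : Set V)).edgeSet.ncard : ℤ) + G.degree v
      = G.edgeSet.ncard := by exact_mod_cast congrArg (Nat.cast : ℕ → ℤ) hcount
  rcases hcases with h | ⟨hm1, h⟩
  · rw [h] at hdv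
    have : (m : ℤ) * n - (m : ℤ) * (n - 1) = m := by ring
    zify
    linarith
  · rw [h] at hdv
    have hms : m - 1 + 1 = m := by omega
    rw [hms] at hdv
    have hch : ((m + 1).choose 2 : ℤ) = (m.choose 2 : ℤ) + m := by
      push_cast [Nat.choose_succ_succ m 1, Nat.choose_one_right]
      ring
    have hcast : ((m - 1 : ℕ) : ℤ) = (m : ℤ) - 1 := by omega
    rw [hcast] at hdv
    zify
    nlinarith [hdv, hE, hdegZ, hμn, hch]
end

section
/- Let G be a chordal graph and let μ be an integer-valued graph parameter such that μ(H) ≤ μ(G) for every induced subgraph H of G, μ(G) ≤ μ(G-v)+1 for every vertex v, μ(G) = μ(G-v)+1 whenever v is adjacent to all other vertices and G has an edge, and μ(K_t) = t - 1 for every complete graph K_t. Then |E(G)| ≤ μ(G)·|V(G)| - C(μ(G)+1, 2), provided |V(G)| ≥ μ(G). -/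
/-- A graph is chordal if every cycle of length at least 4 has a chord. -/
def IsChordalGraph {V : Type*} (G : SimpleGraph V) : Prop :=
  ∀ (v : V) (c : G.Walk v v), c.IsCycle → 4 ≤ c.length →
    ∃ u w, u ∈ c.support ∧ w ∈ c.support ∧ G.Adj u w ∧ s(u, w) ∉ c.edges

/-!
A chordal graph has a simplicial vertex `v`. Its closed neighbourhood is a clique on `deg v + 1`
vertices, so monotonicity and `μ(K_t) = t - 1` give `deg v ≤ μ(G)`. Deleting `v` removes
`deg v ≤ μ(G)` edges and leaves a chordal graph with `μ(G - v) ≤ μ(G)`; as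
`k ↦ k(n - 1) - C(k + 1, 2)` is nondecreasing for `k ≤ n - 1`, induction on `|V|` goes through,
starting from the case `μ(G) = |V|`, where `C(n, 2) + C(n + 1, 2) = n²`.

For the simplicial vertex (Dirac): if `a ∉ N[b]`, let `C` be the component of `a` in `G - N[b]`.
Its vertex boundary lies in `N(b)` and is a clique, since two non-adjacent boundary vertices
would close a chordless cycle of length at least 4 through `b` and `C`. Induction on
`G[C ∪ ∂C]`, which misses `b`, yields a vertex of `C` simplicial there, hence in `G`.
-/

namespace SimpleGraph

variable {V : Type*} {G : SimpleGraph V}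

namespace Walk

variable [DecidableEq V]

lemma isChordless_of_forall_length_le {u v : V} (p : G.Walk u v)
    (hmin : ∀ q : G.Walk u v, (∀ z ∈ q.support, z ∈ p.support) → p.length ≤ q.length) :
    p.IsChordless := by
  rw [isChordless_iff_forall_mem_edges]
  induction p with
  | nil =>
    intro x y hx hy hxy
    simp only [support_nil, List.mem_singleton] at hx hy
    exact absurd (hx.trans hy.symm) hxy.ne
  | @cons u v w huv p ih =>
    have hp := ih fun q hq => by
      simpa using hmin (cons huv q) fun z hz => by
        simp only [support_cons, List.mem_cons] at hz ⊢
        exact hz.imp_right (hq z)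
    have hu : ∀ y ∈ p.support, G.Adj u y → s(u, y) ∈ (cons huv p).edges := by
      intro y hy huy
      obtain rfl | hyv := eq_or_ne y v
      · simp
      have htake : 1 ≤ (p.takeUntil y hy).length :=
        Nat.one_le_iff_ne_zero.2 fun h => hyv (eq_of_length_eq_zero h).symm
      have hsplit := congrArg length (p.take_spec hy)
      have := hmin (cons huy (p.dropUntil y hy)) fun z hz => by
        simp only [support_cons, List.mem_cons] at hz ⊢
        exact hz.imp_right fun hz => p.support_dropUntil_subset_support hy hz
      simp only [length_cons, length_append] at this hsplit
      omega
    intro x y hx hy hxy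
    simp only [support_cons, List.mem_cons] at hx hy
    rcases hx with rfl | hx <;> rcases hy with rfl | hy
    · exact absurd hxy (G.loopless.irrefl _)
    · exact hu y hy hxy
    · rw [Sym2.eq_swap]
      exact hu x hx hxy.symm
    · exact List.mem_cons_of_mem _ (hp hx hy hxy)

lemma exists_isPath_isChordless {u v : V} (T : Set V) (p : G.Walk u v)
    (hp : ∀ z ∈ p.support, z ∈ T) :
    ∃ q : G.Walk u v, q.IsPath ∧ q.IsChordless ∧ ∀ z ∈ q.support, z ∈ T := by
  obtain ⟨q, hqT, hqmin⟩ := (measure fun q : G.Walk u v => q.length).wf.has_min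
    {q | ∀ z ∈ q.support, z ∈ T} ⟨p, hp⟩
  have hbT : ∀ z ∈ q.bypass.support, z ∈ T :=
    fun z hz => hqT z (support_bypass_subset_support _ hz)
  refine ⟨q.bypass, bypass_isPath _, isChordless_of_forall_length_le _ fun r hr => ?_, hbT⟩
  exact (length_bypass_le_length q).trans (not_lt.1 (hqmin r fun z hz => hbT z (hr z hz)))

end Walk

def vertexBoundary (G : SimpleGraph V) (C : Set V) : Set V :=
  {s | s ∉ C ∧ ∃ c ∈ C, G.Adj c s}

def IsSimplicial (G : SimpleGraph V) (v : V) : Prop :=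
  G.IsClique (G.neighborSet v)

lemma IsSimplicial.of_induce {s : Set V} {v : s} (hv : (G.induce s).IsSimplicial v)
    (hN : G.neighborSet v ⊆ s) : G.IsSimplicial v := by
  intro a ha b hb hab
  exact @hv ⟨a, hN ha⟩ ha ⟨b, hN hb⟩ hb fun h => hab (congrArg Subtype.val h)

lemma exists_not_adj_of_maximal_isClique {K : Set V} (hK : Maximal G.IsClique K) {a : V}
    (ha : a ∉ K) : ∃ b ∈ K, a ≠ b ∧ ¬ G.Adj b a := by
  by_contra! h
  exact ha (hK.2 (isClique_insert.2 ⟨hK.1, fun b hb hab => (h b hb hab).symm⟩)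
    (Set.subset_insert _ _) (Set.mem_insert _ _))

end SimpleGraph

open SimpleGraph Walk
open scoped Finset

section Chordal

variable {V : Type*} {G : SimpleGraph V}

lemma IsChordalGraph.of_embedding {W : Type*} {H : SimpleGraph W} (f : H ↪g G)
    (hG : IsChordalGraph G) : IsChordalGraph H := by
  intro v c hc hlen
  obtain ⟨u, w, hu, hw, huw, hne⟩ :=
    hG _ (c.map f.toHom) (hc.map f.injective) (by rwa [length_map])
  rw [Walk.support_map, List.mem_map] at hu hw
  obtain ⟨u, hu, rfl⟩ := hu
  obtain ⟨w, hw, rfl⟩ := hw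
  refine ⟨u, w, hu, hw, f.map_adj_iff.1 huw, fun he => hne ?_⟩
  rw [Walk.edges_map]
  exact List.mem_map_of_mem he

lemma IsChordalGraph.adj_of_walk_avoiding_closedNbhd [DecidableEq V] (hG : IsChordalGraph G)
    {b x y : V} (hbx : G.Adj b x) (hby : G.Adj b y) (hxy : x ≠ y) (p : G.Walk x y)
    (hp : ∀ z ∈ p.support, z = x ∨ z = y ∨ (z ≠ b ∧ ¬ G.Adj b z)) : G.Adj x y := by
  by_contra hnxy
  obtain ⟨q, hq, hqc, hqT⟩ := p.exists_isPath_isChordless _ hp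
  have hbq : b ∉ q.support := fun hb => by
    rcases hqT b hb with rfl | rfl | h
    exacts [hbx.ne rfl, hby.ne rfl, h.1 rfl]
  have hlen : 2 ≤ q.length := by
    by_contra! h
    interval_cases h' : q.length
    exacts [hxy (eq_of_length_eq_zero h'), hnxy (adj_of_length_eq_one h')]
  set c := cons hbx (q.concat hby.symm)
  have hc : c.IsCycle := by
    refine (cons_isCycle_iff _ _).2 ⟨hq.concat hbq hby.symm, fun he => ?_⟩
    rw [edges_concat, List.concat_eq_append, List.mem_append, List.mem_singleton] at he
    rcases he with he | he
    · exact hbq (q.fst_mem_support_of_mem_edges he)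
    · obtain ⟨rfl, rfl⟩ | rfl := by simpa using he
      exacts [hbx.ne rfl, hxy rfl]
  have hbc : ∀ z ∈ q.support, G.Adj b z → s(b, z) ∈ c.edges := by
    intro z hz hbz
    rcases hqT z hz with rfl | rfl | h
    · simp [c]
    · simp [c, edges_concat, Sym2.eq_swap]
    · exact absurd hbz h.2
  have hsupp : ∀ z ∈ c.support, z = b ∨ z ∈ q.support := by
    intro z hz
    simp only [c, support_cons, support_concat, List.mem_cons, List.mem_append,
      List.not_mem_nil, or_false] at hz
    tauto
  obtain ⟨u, w, hu, hw, huw, hne⟩ := hG b c hc (by simp [c]; omega)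
  apply hne
  rcases hsupp u hu with rfl | hu' <;> rcases hsupp w hw with rfl | hw'
  · exact absurd huw (G.loopless.irrefl _)
  · exact hbc w hw' huw
  · rw [Sym2.eq_swap]
    exact hbc u hu' huw.symm
  · simp [c, edges_concat, hqc.mem_edges hu' hw' huw]

lemma IsChordalGraph.exists_isClique_vertexBoundary (hG : IsChordalGraph G) {a b : V}
    (hab : a ≠ b) (hba : ¬ G.Adj b a) :
    ∃ C : Set V, a ∈ C ∧ (∀ c ∈ C, c ≠ b ∧ ¬ G.Adj b c) ∧
      G.IsClique (G.vertexBoundary C) := by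
  classical
  set R : Set V := {z | z ≠ b ∧ ¬ G.Adj b z}
  set C : Set V := {c | ∃ p : G.Walk a c, ∀ z ∈ p.support, z ∈ R}
  have hCR : ∀ c ∈ C, c ∈ R := fun c ⟨p, hp⟩ => hp c p.end_mem_support
  have hCadj : ∀ c ∈ C, ∀ d ∈ R, G.Adj c d → d ∈ C := by
    rintro c ⟨p, hp⟩ d hd hcd
    refine ⟨p.concat hcd, fun z hz => ?_⟩
    rw [support_concat, List.mem_append, List.mem_singleton] at hz
    exact hz.elim (hp z) fun h => h ▸ hd
  have hbd : ∀ s ∈ G.vertexBoundary C, G.Adj b s := by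
    rintro s ⟨hsC, c, hc, hcs⟩
    by_contra hbs
    have hsb : s ≠ b := fun h => (hCR c hc).2 (h ▸ hcs.symm)
    exact hsC (hCadj c hc s ⟨hsb, hbs⟩ hcs)
  refine ⟨C, ⟨nil, fun z hz => ?_⟩, hCR, ?_⟩
  · rw [support_nil, List.mem_singleton] at hz
    exact hz ▸ ⟨hab, hba⟩
  rintro x hx y hy hxy
  have hbx := hbd x hx
  have hby := hbd y hy
  obtain ⟨-, cx, ⟨px, hpx⟩, hxc⟩ := hx
  obtain ⟨-, cy, ⟨py, hpy⟩, hyc⟩ := hy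
  refine hG.adj_of_walk_avoiding_closedNbhd hbx hby hxy
    (cons hxc.symm ((px.reverse.append py).concat hyc)) fun z hz => ?_
  simp only [support_cons, support_concat, support_append, support_reverse, List.mem_cons,
    List.mem_append, List.mem_reverse, List.not_mem_nil, or_false] at hz
  rcases hz with rfl | (hz | hz) | rfl
  · exact .inl rfl
  · exact .inr (.inr (hpx z hz))
  · exact .inr (.inr (hpy z (List.mem_of_mem_tail hz)))
  · exact .inr (.inl rfl)

theorem IsChordalGraph.exists_isSimplicial_notMem [Finite V] (hG : IsChordalGraph G) {K : Set V}
    (hK : G.IsClique K) {a : V} (ha : a ∉ K) : ∃ v ∉ K, G.IsSimplicial v := by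
  induction h : Nat.card V using Nat.strong_induction_on generalizing V with
  | _ n ih =>
  -- Some `b` of a maximal clique `K' ⊇ K` is non-adjacent to some `a'`; the simplicial vertex
  -- found in the component of `a'` in `G - N[b]` then avoids `N[b] ⊇ K' ⊇ K`.
  obtain ⟨K', hKK', hmax⟩ := Finite.exists_le_maximal hK
  by_cases hfull : ∀ a', a' ∈ K'
  · exact ⟨a, ha, fun x _ y _ hxy => hmax.1 (hfull x) (hfull y) hxy⟩
  obtain ⟨a', ha'⟩ := not_forall.1 hfull
  obtain ⟨b, hbK', hab, hba⟩ := exists_not_adj_of_maximal_isClique hmax ha'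
  obtain ⟨C, ha'C, hCR, hS⟩ := hG.exists_isClique_vertexBoundary hab hba
  set W := C ∪ G.vertexBoundary C
  have hbW : b ∉ W := by
    rintro (hb | ⟨-, c, hc, hcb⟩)
    exacts [(hCR b hb).1 rfl, (hCR c hc).2 hcb.symm]
  obtain ⟨v, hvS, hv⟩ := ih _ (h ▸ Finite.card_subtype_lt hbW)
    (hG.of_embedding (Embedding.induce W))
    (K := Subtype.val ⁻¹' G.vertexBoundary C) (a := ⟨a', .inl ha'C⟩)
    (fun x hx y hy hxy => by simpa using hS hx hy (Subtype.val_injective.ne hxy))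
    (fun h => h.1 ha'C) rfl
  have hvC : (v : V) ∈ C := v.2.resolve_right hvS
  refine ⟨v, fun hvK => ?_, hv.of_induce fun w hw => ?_⟩
  · obtain ⟨hvb, hbv⟩ := hCR v hvC
    exact hbv (hmax.1 hbK' (hKK' hvK) hvb.symm)
  · by_cases hwC : w ∈ C
    exacts [.inl hwC, .inr ⟨hwC, v, hvC, hw⟩]

theorem IsChordalGraph.exists_isSimplicial [Finite V] [Nonempty V] (hG : IsChordalGraph G) :
    ∃ v, G.IsSimplicial v := by
  obtain ⟨v, -, hv⟩ := hG.exists_isSimplicial_notMem (K := ∅) isClique_empty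
    (Set.notMem_empty (Classical.arbitrary V))
  exact ⟨v, hv⟩

end Chordal

lemma Nat.mul_add_choose_two_le {k l N : ℕ} (hkl : k ≤ l) (hl : l ≤ N) :
    k * N + (l + 1).choose 2 ≤ l * N + (k + 1).choose 2 := by
  obtain rfl | hlt := hkl.eq_or_lt
  · rfl
  qify [Nat.cast_choose_two]
  have hkl' : (k : ℚ) + 1 ≤ l := by exact_mod_cast hlt
  have hl' : (l : ℚ) ≤ N := by exact_mod_cast hl
  nlinarith

lemma Nat.choose_two_add_succ_choose_two (n : ℕ) : n.choose 2 + (n + 1).choose 2 = n * n := by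
  qify [Nat.cast_choose_two]
  ring

section GraphParameter

variable (μ : ∀ (V : Type) [Fintype V] [DecidableEq V], SimpleGraph V → ℕ)
    (hmono : ∀ (V : Type) [Fintype V] [DecidableEq V] (G : SimpleGraph V)
      (s : Set V) [DecidablePred (· ∈ s)], μ ↥s (G.induce s) ≤ μ V G)
    (hcomplete : ∀ (V : Type) [Fintype V] [DecidableEq V],
      μ V (⊤ : SimpleGraph V) = Fintype.card V - 1)
include hmono hcomplete

lemma degree_le_of_isSimplicial {V : Type} [Fintype V] [DecidableEq V] {G : SimpleGraph V}
    [DecidableRel G.Adj] {v : V} (hv : G.IsSimplicial v) : G.degree v ≤ μ V G := by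
  have hs : G.IsClique (insert v (G.neighborSet v)) :=
    isClique_insert.2 ⟨hv, fun _ hw _ => hw⟩
  have := hmono V G (insert v (G.neighborSet v))
  rw [induce_eq_top.2 hs, hcomplete, Fintype.card_eq_nat_card, Nat.card_coe_set_eq,
    Set.ncard_insert_of_notMem (by simp), Set.ncard_eq_toFinset_card',
    ← neighborFinset_def, card_neighborFinset_eq_degree] at this
  omega

theorem IsChordalGraph.card_edgeFinset_add_choose_two_le {V : Type} [Fintype V] [DecidableEq V]
    {G : SimpleGraph V} [DecidableRel G.Adj] (hG : IsChordalGraph G)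
    (hμ : μ V G ≤ Fintype.card V) :
    #G.edgeFinset + (μ V G + 1).choose 2 ≤ μ V G * Fintype.card V := by
  induction h : Fintype.card V generalizing V with
  | zero =>
    rw [h, Nat.le_zero] at hμ
    simpa [hμ, h] using G.card_edgeFinset_le_card_choose_two
  | succ N ih =>
    obtain heq | hlt := (h ▸ hμ).eq_or_lt
    · rw [heq, ← h]
      linarith [G.card_edgeFinset_le_card_choose_two,
        Nat.choose_two_add_succ_choose_two (Fintype.card V)]
    have : Nonempty V := Fintype.card_pos_iff.1 (by omega)
    obtain ⟨v, hv⟩ := hG.exists_isSimplicial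
    have hdeg := degree_le_of_isSimplicial μ hmono hcomplete hv
    have hsplit : #G.edgeFinset = #(G.induce {v}ᶜ).edgeFinset + G.degree v := by
      rw [card_edgeFinset_induce_compl_singleton, card_edgeFinset_deleteIncidenceSet]
      have := G.degree_le_card_edgeFinset v
      omega
    have hμv := hmono V G {v}ᶜ
    have hcard : Fintype.card ↥({v}ᶜ : Set V) = N := by
      rw [Fintype.card_compl_set, h, Fintype.card_unique, Nat.add_sub_cancel]
    have hIH := ih (hG.of_embedding (Embedding.induce {v}ᶜ)) (hcard ▸ hμv.trans (by omega))
      hcard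
    have hstep := Nat.mul_add_choose_two_le hμv (Nat.lt_succ_iff.1 hlt)
    linarith

end GraphParameter

theorem stmt_6_general
    (μ : ∀ (V : Type) [Fintype V] [DecidableEq V], SimpleGraph V → ℕ)
    (hmono : ∀ (V : Type) [Fintype V] [DecidableEq V] (G : SimpleGraph V)
      (s : Set V) [DecidablePred (· ∈ s)], μ ↥s (G.induce s) ≤ μ V G)
    (hcomplete : ∀ (V : Type) [Fintype V] [DecidableEq V],
      μ V (⊤ : SimpleGraph V) = Fintype.card V - 1)
    (V : Type) [Fintype V] [DecidableEq V] (G : SimpleGraph V)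
    (hchordal : IsChordalGraph G) (hcard : μ V G ≤ Fintype.card V) :
    (G.edgeSet.ncard : ℤ) ≤ μ V G * Fintype.card V - ((μ V G + 1).choose 2 : ℕ) := by
  classical
  have h := hchordal.card_edgeFinset_add_choose_two_le μ hmono hcomplete hcard
  rw [← coe_edgeFinset, Set.ncard_coe_finset]
  zify at h
  linarith

theorem stmt_6
    (μ : ∀ (V : Type) [Fintype V] [DecidableEq V], SimpleGraph V → ℕ)
    (hmono : ∀ (V : Type) [Fintype V] [DecidableEq V] (G : SimpleGraph V)
      (s : Set V) [DecidablePred (· ∈ s)], μ ↥s (G.induce s) ≤ μ V G)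
    (hdel : ∀ (V : Type) [Fintype V] [DecidableEq V] (G : SimpleGraph V) (v : V),
      μ V G ≤ μ ↥({v}ᶜ : Set V) (G.induce {v}ᶜ) + 1)
    (hdom : ∀ (V : Type) [Fintype V] [DecidableEq V] (G : SimpleGraph V) (v : V),
      (∀ w : V, w ≠ v → G.Adj v w) → G.edgeSet.Nonempty →
      μ V G = μ ↥({v}ᶜ : Set V) (G.induce {v}ᶜ) + 1)
    (hcomplete : ∀ (V : Type) [Fintype V] [DecidableEq V],
      μ V (⊤ : SimpleGraph V) = Fintype.card V - 1)
    (V : Type) [Fintype V] [DecidableEq V] (G : SimpleGraph V)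
    (hchordal : IsChordalGraph G) (hcard : μ V G ≤ Fintype.card V) :
    (G.edgeSet.ncard : ℤ) ≤ μ V G * Fintype.card V - ((μ V G + 1).choose 2 : ℕ) :=
  stmt_6_general μ hmono hcomplete V G hchordal hcard
end
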